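/- Let M ∈ 𝒞_H(α,β) and N ∈ 𝒞_H(γ,δ). The braiding map c_{M,N} : M ⊗ N → ᴹN ⊗ M, c(m ⊗ n) = n₍₀₎ ⊗ β⁻¹(n₍₁₎)·m, is bijective with inverse c⁻¹(n ⊗ m) = β⁻¹(S(n₍₁₎))·m ⊗ n₍₀₎. -/
import Mathlib


open TensorProduct

/-- The data of a Hopf quasigroup without its antipode: a unital (possibly nonassociative)
algebra together with a coassociative counital comultiplication which, together with the
counit, is an algebra homomorphism. Everything is expressed in terms of linear maps, so that
Sweedler-notation identities become equalities of composites of linear maps. -/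
structure HopfQuasigroupData (k H : Type*) [Field k] [AddCommGroup H] [Module k H] where
  mul : H ⊗[k] H →ₗ[k] H
  one : H
  comul : H →ₗ[k] H ⊗[k] H
  counit : H →ₗ[k] k
  one_mul : ∀ x : H, mul (one ⊗ₜ[k] x) = x
  mul_one : ∀ x : H, mul (x ⊗ₜ[k] one) = x
  coassoc : (TensorProduct.assoc k H H H).toLinearMap ∘ₗ comul.rTensor H ∘ₗ comul =
    comul.lTensor H ∘ₗ comul
  counit_comul : (TensorProduct.lid k H).toLinearMap ∘ₗ counit.rTensor H ∘ₗ comul =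
    LinearMap.id
  comul_counit : (TensorProduct.rid k H).toLinearMap ∘ₗ counit.lTensor H ∘ₗ comul =
    LinearMap.id
  comul_mul : comul ∘ₗ mul = TensorProduct.map mul mul ∘ₗ
    (TensorProduct.tensorTensorTensorComm k H H H H).toLinearMap ∘ₗ
      TensorProduct.map comul comul
  comul_one : comul one = one ⊗ₜ[k] one
  counit_mul : ∀ x y : H, counit (mul (x ⊗ₜ[k] y)) = counit x * counit y
  counit_one : counit one = 1

namespace HopfQuasigroupData

variable {k H : Type*} [Field k] [AddCommGroup H] [Module k H]

/-- The linear map `h ⊗ g ↦ ε(h)g`. -/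
noncomputable def εl (D : HopfQuasigroupData k H) : H ⊗[k] H →ₗ[k] H :=
  (TensorProduct.lid k H).toLinearMap ∘ₗ D.counit.rTensor H

/-- The linear map `g ⊗ h ↦ ε(h)g`. -/
noncomputable def εr (D : HopfQuasigroupData k H) : H ⊗[k] H →ₗ[k] H :=
  (TensorProduct.rid k H).toLinearMap ∘ₗ D.counit.lTensor H

/-- `S` is an antipode for the Hopf quasigroup data `D`. -/
def IsAntipode (D : HopfQuasigroupData k H) (S : H →ₗ[k] H) : Prop :=
  (D.mul ∘ₗ TensorProduct.map S D.mul ∘ₗ (TensorProduct.assoc k H H H).toLinearMap ∘ₗ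
      D.comul.rTensor H = D.εl) ∧
  (D.mul ∘ₗ TensorProduct.map LinearMap.id (D.mul ∘ₗ S.rTensor H) ∘ₗ
      (TensorProduct.assoc k H H H).toLinearMap ∘ₗ D.comul.rTensor H = D.εl) ∧
  (D.mul ∘ₗ TensorProduct.map (D.mul ∘ₗ S.lTensor H) LinearMap.id ∘ₗ
      (TensorProduct.assoc k H H H).symm.toLinearMap ∘ₗ D.comul.lTensor H = D.εr) ∧
  (D.mul ∘ₗ TensorProduct.map D.mul S ∘ₗ
      (TensorProduct.assoc k H H H).symm.toLinearMap ∘ₗ D.comul.lTensor H = D.εr)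

end HopfQuasigroupData

/-- An automorphism of a Hopf quasigroup `(D, S)`: a linear automorphism which is an algebra
and coalgebra morphism and commutes with the antipode. -/
structure HopfQuasigroupAut {k H : Type*} [Field k] [AddCommGroup H] [Module k H]
    (D : HopfQuasigroupData k H) (S : H →ₗ[k] H) where
  toLinearEquiv : H ≃ₗ[k] H
  map_mul : toLinearEquiv.toLinearMap ∘ₗ D.mul =
    D.mul ∘ₗ TensorProduct.map toLinearEquiv.toLinearMap toLinearEquiv.toLinearMap
  map_one : toLinearEquiv D.one = D.one
  map_comul : D.comul ∘ₗ toLinearEquiv.toLinearMap =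
    TensorProduct.map toLinearEquiv.toLinearMap toLinearEquiv.toLinearMap ∘ₗ D.comul
  map_counit : D.counit ∘ₗ toLinearEquiv.toLinearMap = D.counit
  comm_antipode : toLinearEquiv.toLinearMap ∘ₗ S = S ∘ₗ toLinearEquiv.toLinearMap

namespace HopfQuasigroupAut

variable {k H : Type*} [Field k] [AddCommGroup H] [Module k H]
  {D : HopfQuasigroupData k H} {S : H →ₗ[k] H}

/-- The underlying linear map of a Hopf quasigroup automorphism. -/
def lmap (α : HopfQuasigroupAut D S) : H →ₗ[k] H := α.toLinearEquiv.toLinearMap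

/-- The underlying linear map of the inverse of a Hopf quasigroup automorphism. -/
def invmap (α : HopfQuasigroupAut D S) : H →ₗ[k] H := α.toLinearEquiv.symm.toLinearMap

end HopfQuasigroupAut

section Quasimodules

variable {k H M : Type*} [Field k] [AddCommGroup H] [Module k H]
  [AddCommGroup M] [Module k M]

/-- The linear map `h ⊗ m ↦ ε(h)m`. -/
noncomputable def εAct (D : HopfQuasigroupData k H) (M : Type*) [AddCommGroup M]
    [Module k M] : H ⊗[k] M →ₗ[k] M :=
  (TensorProduct.lid k M).toLinearMap ∘ₗ D.counit.rTensor M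

/-- `act` makes `M` a left quasimodule over the Hopf quasigroup `(D, S)`:
`1·m = m` and `Σ h₁·(S(h₂)·m) = Σ S(h₁)·(h₂·m) = ε(h)m`. -/
def IsQuasimodule (D : HopfQuasigroupData k H) (S : H →ₗ[k] H)
    (act : H ⊗[k] M →ₗ[k] M) : Prop :=
  (∀ m : M, act (D.one ⊗ₜ[k] m) = m) ∧
  (act ∘ₗ (act ∘ₗ S.rTensor M).lTensor H ∘ₗ (TensorProduct.assoc k H H M).toLinearMap ∘ₗ
      D.comul.rTensor M = εAct D M) ∧
  (act ∘ₗ S.rTensor M ∘ₗ act.lTensor H ∘ₗ (TensorProduct.assoc k H H M).toLinearMap ∘ₗ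
      D.comul.rTensor M = εAct D M)

/-- `coact` makes `M` a (counital, coassociative) right comodule over `D`. -/
def IsComodule (D : HopfQuasigroupData k H) (coact : M →ₗ[k] M ⊗[k] H) : Prop :=
  ((TensorProduct.rid k M).toLinearMap ∘ₗ D.counit.lTensor M ∘ₗ coact = LinearMap.id) ∧
  (coact.rTensor H ∘ₗ coact =
    (TensorProduct.assoc k M H H).symm.toLinearMap ∘ₗ D.comul.lTensor M ∘ₗ coact)

/-- The shuffle `(h₁ ⊗ (h₂₁ ⊗ h₂₂)) ⊗ (m₀ ⊗ m₁) ↦ (h₂₁ ⊗ m₀) ⊗ ((h₂₂ ⊗ m₁) ⊗ h₁)`. -/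
noncomputable def ydShuffle (k H M : Type*) [Field k] [AddCommGroup H] [Module k H]
    [AddCommGroup M] [Module k M] :
    (H ⊗[k] (H ⊗[k] H)) ⊗[k] (M ⊗[k] H) →ₗ[k] (H ⊗[k] M) ⊗[k] ((H ⊗[k] H) ⊗[k] H) :=
  (TensorProduct.assoc k (H ⊗[k] M) (H ⊗[k] H) H).toLinearMap ∘ₗ
    (TensorProduct.comm k H ((H ⊗[k] M) ⊗[k] (H ⊗[k] H))).toLinearMap ∘ₗ
      ((TensorProduct.tensorTensorTensorComm k H H M H).toLinearMap.lTensor H) ∘ₗ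
        (TensorProduct.assoc k H (H ⊗[k] H) (M ⊗[k] H)).toLinearMap

/-- The `(α,β)`-Yetter–Drinfeld quasimodule compatibility condition (Eq. (5.1)):
`ρ(h·m) = Σ h₂₁·m₀ ⊗ (β(h₂₂)m₁)α(S⁻¹(h₁))`. -/
noncomputable def YDCompat (D : HopfQuasigroupData k H) (Sinv : H →ₗ[k] H)
    (α β : H →ₗ[k] H) (act : H ⊗[k] M →ₗ[k] M) (coact : M →ₗ[k] M ⊗[k] H) : Prop :=
  coact ∘ₗ act =
    TensorProduct.map act
        (D.mul ∘ₗ TensorProduct.map (D.mul ∘ₗ β.rTensor H) (α ∘ₗ Sinv)) ∘ₗ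
      ydShuffle k H M ∘ₗ coact.lTensor (H ⊗[k] (H ⊗[k] H)) ∘ₗ
        (D.comul.lTensor H).rTensor M ∘ₗ D.comul.rTensor M

end Quasimodules

section Braiding

variable (k : Type*) {H : Type*} (M N : Type*) [Field k] [AddCommGroup H] [Module k H]
  [AddCommGroup M] [Module k M] [AddCommGroup N] [Module k N]

/-- The braiding `c_{M,N}(m ⊗ n) = n₀ ⊗ β⁻¹(n₁)·m` (for `M ∈ 𝒞_H(α,β)`). -/
noncomputable def braiding (βinv : H →ₗ[k] H) (actM : H ⊗[k] M →ₗ[k] M)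
    (coactN : N →ₗ[k] N ⊗[k] H) : M ⊗[k] N →ₗ[k] N ⊗[k] M :=
  (actM ∘ₗ βinv.rTensor M).lTensor N ∘ₗ (TensorProduct.assoc k N H M).toLinearMap ∘ₗ
    coactN.rTensor M ∘ₗ (TensorProduct.comm k M N).toLinearMap

/-- The inverse braiding `c⁻¹(n ⊗ m) = β⁻¹(S(n₁))·m ⊗ n₀`. -/
noncomputable def braidingInv (βinv S : H →ₗ[k] H) (actM : H ⊗[k] M →ₗ[k] M)
    (coactN : N →ₗ[k] N ⊗[k] H) : N ⊗[k] M →ₗ[k] M ⊗[k] N :=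
  TensorProduct.map (actM ∘ₗ (βinv ∘ₗ S).rTensor M) LinearMap.id ∘ₗ
    (TensorProduct.comm k N (H ⊗[k] M)).toLinearMap ∘ₗ
      (TensorProduct.assoc k N H M).toLinearMap ∘ₗ coactN.rTensor M

end Braiding

section Statement15

variable {k H M N : Type*} [Field k] [AddCommGroup H] [Module k H]
  [AddCommGroup M] [Module k M] [AddCommGroup N] [Module k N]

set_option maxHeartbeats 1000000 in
/-- For `M ∈ 𝒞_H(α,β)` and `N ∈ 𝒞_H(γ,δ)`, the braiding
`c_{M,N}(m ⊗ n) = n₀ ⊗ β⁻¹(n₁)·m` is bijective, with inverse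
`c⁻¹(n ⊗ m) = β⁻¹(S(n₁))·m ⊗ n₀`. -/
theorem braiding_bijective (D : HopfQuasigroupData k H) (S : H →ₗ[k] H)
    (hS : D.IsAntipode S) (Sinv : H →ₗ[k] H) (hSinv₁ : S ∘ₗ Sinv = LinearMap.id)
    (hSinv₂ : Sinv ∘ₗ S = LinearMap.id)
    (α β γ δ : HopfQuasigroupAut D S)
    (actM : H ⊗[k] M →ₗ[k] M) (coactM : M →ₗ[k] M ⊗[k] H)
    (actN : H ⊗[k] N →ₗ[k] N) (coactN : N →ₗ[k] N ⊗[k] H)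
    (hMq : IsQuasimodule D S actM) (hMc : IsComodule D coactM)
    (hMyd : YDCompat D Sinv α.lmap β.lmap actM coactM)
    (hNq : IsQuasimodule D S actN) (hNc : IsComodule D coactN)
    (hNyd : YDCompat D Sinv γ.lmap δ.lmap actN coactN) :
    (braiding k M N β.invmap actM coactN ∘ₗ braidingInv k M N β.invmap S actM coactN =
        LinearMap.id) ∧
      (braidingInv k M N β.invmap S actM coactN ∘ₗ braiding k M N β.invmap actM coactN =
        LinearMap.id) ∧
      Function.Bijective (braiding k M N β.invmap actM coactN) := by
  obtain ⟨hN1, hN2⟩ := hNc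
  obtain ⟨hM1, hM2, hM3⟩ := hMq
  -- Basic facts about the inverse of β
  have hβ1 : ∀ h : H, β.lmap (β.invmap h) = h := fun h => by
    simp [HopfQuasigroupAut.lmap, HopfQuasigroupAut.invmap]
  have hβ2 : ∀ h : H, β.invmap (β.lmap h) = h := fun h => by
    simp [HopfQuasigroupAut.lmap, HopfQuasigroupAut.invmap]
  have hεβ : ∀ h : H, D.counit (β.invmap h) = D.counit h := by
    intro h
    have h1 := LinearMap.congr_fun β.map_counit (β.invmap h)
    simp only [LinearMap.comp_apply] at h1
    rw [show β.toLinearEquiv.toLinearMap (β.invmap h) = h from hβ1 h] at h1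
    exact h1.symm
  have hSβ : ∀ h : H, S (β.invmap h) = β.invmap (S h) := by
    intro h
    have h1 := LinearMap.congr_fun β.comm_antipode (β.invmap h)
    simp only [LinearMap.comp_apply] at h1
    rw [show β.toLinearEquiv.toLinearMap (β.invmap h) = h from hβ1 h] at h1
    calc S (β.invmap h) = β.invmap (β.lmap (S (β.invmap h))) := (hβ2 _).symm
      _ = β.invmap (S h) := by rw [show β.lmap (S (β.invmap h)) = S h from h1]
  have cancel : ∀ x : H ⊗[k] H,
      TensorProduct.map β.invmap β.invmap (TensorProduct.map β.lmap β.lmap x) = x := by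
    intro x
    induction x using TensorProduct.induction_on with
    | zero => simp
    | tmul a' b' => simp [hβ2]
    | add x y hx hy => simp only [map_add, hx, hy]
  have hΔβ : ∀ h : H, D.comul (β.invmap h)
      = TensorProduct.map β.invmap β.invmap (D.comul h) := by
    intro h
    have h1 := LinearMap.congr_fun β.map_comul (β.invmap h)
    simp only [LinearMap.comp_apply] at h1
    rw [show β.toLinearEquiv.toLinearMap (β.invmap h) = h from hβ1 h] at h1
    have h2 := congrArg (TensorProduct.map β.invmap β.invmap) h1
    rw [show TensorProduct.map β.toLinearEquiv.toLinearMap β.toLinearEquiv.toLinearMap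
          (D.comul (β.invmap h))
        = TensorProduct.map β.lmap β.lmap (D.comul (β.invmap h)) from rfl, cancel] at h2
    exact h2.symm
  -- The two key pointwise quasimodule identities (with β⁻¹ inserted)
  have hW : ∀ (h : H) (m : M),
      (actM ∘ₗ β.invmap.rTensor M)
        (((actM ∘ₗ (β.invmap ∘ₗ S).rTensor M).lTensor H)
          ((TensorProduct.assoc k H H M) (D.comul h ⊗ₜ[k] m))) = D.counit h • m := by
    intro h m
    have base := LinearMap.congr_fun hM2 (β.invmap h ⊗ₜ[k] m)
    simp only [LinearMap.comp_apply, LinearMap.rTensor_tmul, LinearEquiv.coe_coe] at base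
    rw [hΔβ] at base
    rw [show εAct D M (β.invmap h ⊗ₜ[k] m) = D.counit h • m from by
      simp [εAct, hεβ]] at base
    have inner : ∀ x : H ⊗[k] H,
        (actM ∘ₗ β.invmap.rTensor M)
          (((actM ∘ₗ (β.invmap ∘ₗ S).rTensor M).lTensor H)
            ((TensorProduct.assoc k H H M) (x ⊗ₜ[k] m)))
        = actM (((actM ∘ₗ S.rTensor M).lTensor H)
            ((TensorProduct.assoc k H H M)
              ((TensorProduct.map β.invmap β.invmap x) ⊗ₜ[k] m))) := by
      intro x
      induction x using TensorProduct.induction_on with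
      | zero => simp only [map_zero, LinearMap.map_zero, zero_tmul, tmul_zero, LinearMap.comp_apply, LinearEquiv.coe_coe, LinearMap.rTensor_tmul, LinearMap.lTensor_tmul, TensorProduct.assoc_tmul, TensorProduct.assoc_symm_tmul, TensorProduct.comm_tmul, TensorProduct.map_tmul, LinearMap.id_coe, id_eq]
      | tmul h₁ h₂ => simp only [LinearMap.comp_apply, LinearEquiv.coe_coe, LinearMap.rTensor_tmul, LinearMap.lTensor_tmul, TensorProduct.assoc_tmul, TensorProduct.assoc_symm_tmul, TensorProduct.comm_tmul, TensorProduct.map_tmul, LinearMap.id_coe, id_eq, hSβ]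
      | add x y hx hy => simp only [add_tmul, tmul_add, map_add, hx, hy]
    rw [inner (D.comul h)]
    exact base
  have hW₂ : ∀ (h : H) (m : M),
      (actM ∘ₗ (β.invmap ∘ₗ S).rTensor M)
        (((actM ∘ₗ β.invmap.rTensor M).lTensor H)
          ((TensorProduct.assoc k H H M) (D.comul h ⊗ₜ[k] m))) = D.counit h • m := by
    intro h m
    have base := LinearMap.congr_fun hM3 (β.invmap h ⊗ₜ[k] m)
    simp only [LinearMap.comp_apply, LinearMap.rTensor_tmul, LinearEquiv.coe_coe] at base
    rw [hΔβ] at base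
    rw [show εAct D M (β.invmap h ⊗ₜ[k] m) = D.counit h • m from by
      simp [εAct, hεβ]] at base
    have inner : ∀ x : H ⊗[k] H,
        (actM ∘ₗ (β.invmap ∘ₗ S).rTensor M)
          (((actM ∘ₗ β.invmap.rTensor M).lTensor H)
            ((TensorProduct.assoc k H H M) (x ⊗ₜ[k] m)))
        = actM (S.rTensor M ((actM.lTensor H)
            ((TensorProduct.assoc k H H M)
              ((TensorProduct.map β.invmap β.invmap x) ⊗ₜ[k] m)))) := by
      intro x
      induction x using TensorProduct.induction_on with
      | zero => simp only [map_zero, LinearMap.map_zero, zero_tmul, tmul_zero, LinearMap.comp_apply, LinearEquiv.coe_coe, LinearMap.rTensor_tmul, LinearMap.lTensor_tmul, TensorProduct.assoc_tmul, TensorProduct.assoc_symm_tmul, TensorProduct.comm_tmul, TensorProduct.map_tmul, LinearMap.id_coe, id_eq]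
      | tmul h₁ h₂ => simp only [LinearMap.comp_apply, LinearEquiv.coe_coe, LinearMap.rTensor_tmul, LinearMap.lTensor_tmul, TensorProduct.assoc_tmul, TensorProduct.assoc_symm_tmul, TensorProduct.comm_tmul, TensorProduct.map_tmul, LinearMap.id_coe, id_eq, hSβ]
      | add x y hx hy => simp only [add_tmul, tmul_add, map_add, hx, hy]
    rw [inner (D.comul h)]
    exact base
  -- comodule identities, pointwise
  have ht1 : ∀ n : N, coactN.rTensor H (coactN n)
      = (TensorProduct.assoc k N H H).symm ((D.comul.lTensor N) (coactN n)) := by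
    intro n
    have := LinearMap.congr_fun hN2 n
    simpa using this
  have ht2 : ∀ n : N, (TensorProduct.rid k N) ((D.counit.lTensor N) (coactN n)) = n := by
    intro n
    have := LinearMap.congr_fun hN1 n
    simpa using this
  -- Goal 1 : c ∘ c⁻¹ = id
  have goal1 : braiding k M N β.invmap actM coactN ∘ₗ
      braidingInv k M N β.invmap S actM coactN = LinearMap.id := by
    apply TensorProduct.ext'
    intro n m
    rw [LinearMap.comp_apply, LinearMap.id_apply]
    have e0 : braidingInv k M N β.invmap S actM coactN (n ⊗ₜ[k] m)
        = (TensorProduct.map (actM ∘ₗ (β.invmap ∘ₗ S).rTensor M) LinearMap.id)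
            ((TensorProduct.comm k N (H ⊗[k] M))
              ((TensorProduct.assoc k N H M) (coactN n ⊗ₜ[k] m))) := by
      simp only [braidingInv, LinearMap.comp_apply, LinearEquiv.coe_coe, LinearMap.rTensor_tmul, LinearMap.lTensor_tmul, TensorProduct.assoc_tmul, TensorProduct.assoc_symm_tmul, TensorProduct.comm_tmul, TensorProduct.map_tmul, LinearMap.id_coe, id_eq]
    rw [e0]
    have claimA : ∀ s : N ⊗[k] H,
        braiding k M N β.invmap actM coactN
          ((TensorProduct.map (actM ∘ₗ (β.invmap ∘ₗ S).rTensor M) LinearMap.id)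
            ((TensorProduct.comm k N (H ⊗[k] M))
              ((TensorProduct.assoc k N H M) (s ⊗ₜ[k] m))))
        = ((actM ∘ₗ β.invmap.rTensor M).lTensor N)
            ((TensorProduct.assoc k N H M)
              (((actM ∘ₗ (β.invmap ∘ₗ S).rTensor M).lTensor (N ⊗[k] H))
                ((TensorProduct.assoc k (N ⊗[k] H) H M)
                  ((coactN.rTensor H s) ⊗ₜ[k] m)))) := by
      intro s
      induction s using TensorProduct.induction_on with
      | zero => simp only [braiding, map_zero, LinearMap.map_zero, zero_tmul, tmul_zero, LinearMap.comp_apply, LinearEquiv.coe_coe, LinearMap.rTensor_tmul, LinearMap.lTensor_tmul, TensorProduct.assoc_tmul, TensorProduct.assoc_symm_tmul, TensorProduct.comm_tmul, TensorProduct.map_tmul, LinearMap.id_coe, id_eq]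
      | tmul n' h => simp only [braiding, LinearMap.comp_apply, LinearEquiv.coe_coe, LinearMap.rTensor_tmul, LinearMap.lTensor_tmul, TensorProduct.assoc_tmul, TensorProduct.assoc_symm_tmul, TensorProduct.comm_tmul, TensorProduct.map_tmul, LinearMap.id_coe, id_eq]
      | add x y hx hy => simp only [add_tmul, tmul_add, map_add, hx, hy]
    rw [claimA (coactN n), ht1 n]
    have claimB : ∀ s : N ⊗[k] H,
        ((actM ∘ₗ β.invmap.rTensor M).lTensor N)
            ((TensorProduct.assoc k N H M)
              (((actM ∘ₗ (β.invmap ∘ₗ S).rTensor M).lTensor (N ⊗[k] H))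
                ((TensorProduct.assoc k (N ⊗[k] H) H M)
                  (((TensorProduct.assoc k N H H).symm ((D.comul.lTensor N) s)) ⊗ₜ[k] m))))
        = ((TensorProduct.rid k N) ((D.counit.lTensor N) s)) ⊗ₜ[k] m := by
      intro s
      induction s using TensorProduct.induction_on with
      | zero => simp only [map_zero, LinearMap.map_zero, zero_tmul, tmul_zero, LinearMap.comp_apply, LinearEquiv.coe_coe, LinearMap.rTensor_tmul, LinearMap.lTensor_tmul, TensorProduct.assoc_tmul, TensorProduct.assoc_symm_tmul, TensorProduct.comm_tmul, TensorProduct.map_tmul, LinearMap.id_coe, id_eq]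
      | tmul n' h =>
        have inner : ∀ x : H ⊗[k] H,
            ((actM ∘ₗ β.invmap.rTensor M).lTensor N)
              ((TensorProduct.assoc k N H M)
                (((actM ∘ₗ (β.invmap ∘ₗ S).rTensor M).lTensor (N ⊗[k] H))
                  ((TensorProduct.assoc k (N ⊗[k] H) H M)
                    (((TensorProduct.assoc k N H H).symm (n' ⊗ₜ[k] x)) ⊗ₜ[k] m))))
            = n' ⊗ₜ[k] ((actM ∘ₗ β.invmap.rTensor M)
                (((actM ∘ₗ (β.invmap ∘ₗ S).rTensor M).lTensor H)
                  ((TensorProduct.assoc k H H M) (x ⊗ₜ[k] m)))) := by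
          intro x
          induction x using TensorProduct.induction_on with
          | zero => simp only [map_zero, LinearMap.map_zero, zero_tmul, tmul_zero, LinearMap.comp_apply, LinearEquiv.coe_coe, LinearMap.rTensor_tmul, LinearMap.lTensor_tmul, TensorProduct.assoc_tmul, TensorProduct.assoc_symm_tmul, TensorProduct.comm_tmul, TensorProduct.map_tmul, LinearMap.id_coe, id_eq]
          | tmul h₁ h₂ => simp only [LinearMap.comp_apply, LinearEquiv.coe_coe, LinearMap.rTensor_tmul, LinearMap.lTensor_tmul, TensorProduct.assoc_tmul, TensorProduct.assoc_symm_tmul, TensorProduct.comm_tmul, TensorProduct.map_tmul, LinearMap.id_coe, id_eq]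
          | add x y hx hy => simp only [tmul_add, add_tmul, map_add, hx, hy]
        rw [show (D.comul.lTensor N) (n' ⊗ₜ[k] h) = n' ⊗ₜ[k] D.comul h from
          LinearMap.lTensor_tmul _ _ _ _, inner (D.comul h), hW h m]
        simp only [LinearMap.lTensor_tmul, TensorProduct.rid_tmul]
        rw [TensorProduct.smul_tmul, TensorProduct.tmul_smul]
      | add x y hx hy => simp only [add_tmul, tmul_add, map_add, hx, hy]
    rw [claimB (coactN n), ht2 n]
  -- Goal 2 : c⁻¹ ∘ c = id
  have goal2 : braidingInv k M N β.invmap S actM coactN ∘ₗ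
      braiding k M N β.invmap actM coactN = LinearMap.id := by
    apply TensorProduct.ext'
    intro m n
    rw [LinearMap.comp_apply, LinearMap.id_apply]
    have e0 : braiding k M N β.invmap actM coactN (m ⊗ₜ[k] n)
        = ((actM ∘ₗ β.invmap.rTensor M).lTensor N)
            ((TensorProduct.assoc k N H M) (coactN n ⊗ₜ[k] m)) := by
      simp only [braiding, LinearMap.comp_apply, LinearEquiv.coe_coe, LinearMap.rTensor_tmul, LinearMap.lTensor_tmul, TensorProduct.assoc_tmul, TensorProduct.assoc_symm_tmul, TensorProduct.comm_tmul, TensorProduct.map_tmul, LinearMap.id_coe, id_eq]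
    rw [e0]
    have claimA : ∀ s : N ⊗[k] H,
        braidingInv k M N β.invmap S actM coactN
          (((actM ∘ₗ β.invmap.rTensor M).lTensor N)
            ((TensorProduct.assoc k N H M) (s ⊗ₜ[k] m)))
        = (TensorProduct.map (actM ∘ₗ (β.invmap ∘ₗ S).rTensor M) LinearMap.id)
            ((TensorProduct.comm k N (H ⊗[k] M))
              ((TensorProduct.assoc k N H M)
                (((actM ∘ₗ β.invmap.rTensor M).lTensor (N ⊗[k] H))
                  ((TensorProduct.assoc k (N ⊗[k] H) H M)
                    ((coactN.rTensor H s) ⊗ₜ[k] m))))) := by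
      intro s
      induction s using TensorProduct.induction_on with
      | zero => simp only [braidingInv, map_zero, LinearMap.map_zero, zero_tmul, tmul_zero, LinearMap.comp_apply, LinearEquiv.coe_coe, LinearMap.rTensor_tmul, LinearMap.lTensor_tmul, TensorProduct.assoc_tmul, TensorProduct.assoc_symm_tmul, TensorProduct.comm_tmul, TensorProduct.map_tmul, LinearMap.id_coe, id_eq]
      | tmul n' h => simp only [braidingInv, LinearMap.comp_apply, LinearEquiv.coe_coe, LinearMap.rTensor_tmul, LinearMap.lTensor_tmul, TensorProduct.assoc_tmul, TensorProduct.assoc_symm_tmul, TensorProduct.comm_tmul, TensorProduct.map_tmul, LinearMap.id_coe, id_eq]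
      | add x y hx hy => simp only [add_tmul, tmul_add, map_add, hx, hy]
    rw [claimA (coactN n), ht1 n]
    have claimB : ∀ s : N ⊗[k] H,
        (TensorProduct.map (actM ∘ₗ (β.invmap ∘ₗ S).rTensor M) LinearMap.id)
            ((TensorProduct.comm k N (H ⊗[k] M))
              ((TensorProduct.assoc k N H M)
                (((actM ∘ₗ β.invmap.rTensor M).lTensor (N ⊗[k] H))
                  ((TensorProduct.assoc k (N ⊗[k] H) H M)
                    (((TensorProduct.assoc k N H H).symm ((D.comul.lTensor N) s)) ⊗ₜ[k] m)))))
        = m ⊗ₜ[k] ((TensorProduct.rid k N) ((D.counit.lTensor N) s)) := by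
      intro s
      induction s using TensorProduct.induction_on with
      | zero => simp only [map_zero, LinearMap.map_zero, zero_tmul, tmul_zero, LinearMap.comp_apply, LinearEquiv.coe_coe, LinearMap.rTensor_tmul, LinearMap.lTensor_tmul, TensorProduct.assoc_tmul, TensorProduct.assoc_symm_tmul, TensorProduct.comm_tmul, TensorProduct.map_tmul, LinearMap.id_coe, id_eq]
      | tmul n' h =>
        have inner : ∀ x : H ⊗[k] H,
            (TensorProduct.map (actM ∘ₗ (β.invmap ∘ₗ S).rTensor M) LinearMap.id)
              ((TensorProduct.comm k N (H ⊗[k] M))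
                ((TensorProduct.assoc k N H M)
                  (((actM ∘ₗ β.invmap.rTensor M).lTensor (N ⊗[k] H))
                    ((TensorProduct.assoc k (N ⊗[k] H) H M)
                      (((TensorProduct.assoc k N H H).symm (n' ⊗ₜ[k] x)) ⊗ₜ[k] m)))))
            = ((actM ∘ₗ (β.invmap ∘ₗ S).rTensor M)
                (((actM ∘ₗ β.invmap.rTensor M).lTensor H)
                  ((TensorProduct.assoc k H H M) (x ⊗ₜ[k] m)))) ⊗ₜ[k] n' := by
          intro x
          induction x using TensorProduct.induction_on with
          | zero => simp only [map_zero, LinearMap.map_zero, zero_tmul, tmul_zero, LinearMap.comp_apply, LinearEquiv.coe_coe, LinearMap.rTensor_tmul, LinearMap.lTensor_tmul, TensorProduct.assoc_tmul, TensorProduct.assoc_symm_tmul, TensorProduct.comm_tmul, TensorProduct.map_tmul, LinearMap.id_coe, id_eq]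
          | tmul h₁ h₂ => simp only [LinearMap.comp_apply, LinearEquiv.coe_coe, LinearMap.rTensor_tmul, LinearMap.lTensor_tmul, TensorProduct.assoc_tmul, TensorProduct.assoc_symm_tmul, TensorProduct.comm_tmul, TensorProduct.map_tmul, LinearMap.id_coe, id_eq]
          | add x y hx hy => simp only [tmul_add, add_tmul, map_add, hx, hy]
        rw [show (D.comul.lTensor N) (n' ⊗ₜ[k] h) = n' ⊗ₜ[k] D.comul h from
          LinearMap.lTensor_tmul _ _ _ _, inner (D.comul h), hW₂ h m]
        simp only [LinearMap.lTensor_tmul, TensorProduct.rid_tmul]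
        rw [TensorProduct.smul_tmul, TensorProduct.tmul_smul]
      | add x y hx hy => simp only [add_tmul, tmul_add, map_add, hx, hy]
    rw [claimB (coactN n), ht2 n]
  refine ⟨goal1, goal2, ?_⟩
  exact Function.bijective_iff_has_inverse.mpr
    ⟨braidingInv k M N β.invmap S actM coactN,
      fun x => by simpa using LinearMap.congr_fun goal2 x,
      fun x => by simpa using LinearMap.congr_fun goal1 x⟩

end Statement15
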